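/- arXiv:quant-ph/0205033 — 2 statements merged into one kernel-verified Lean document; each statement's English description precedes it below -/
import Mathlib

section
/- Let ψ_A, ψ_B ∈ ℂ^n be unit vectors. Then C(|ψ_A⟩⟨ψ_A|, |ψ_B⟩⟨ψ_B|) = 1 if |⟨ψ_A, ψ_B⟩| = 1, and C(|ψ_A⟩⟨ψ_A|, |ψ_B⟩⟨ψ_B|) = 0 otherwise. -/
open Matrix BigOperators
open scoped ComplexOrder

/-- A density matrix: positive semidefinite with trace 1. -/
def IsDensityMatrix {d : Type*} [Fintype d] [DecidableEq d]
    (ρ : Matrix d d ℂ) : Prop :=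
  ρ.PosSemidef ∧ ρ.trace = 1

/-- The compatibility `C(ρA, ρB)`: the supremum, over all finite families of density
matrices `σ` and weight vectors `p`, `q` (nonnegative, summing to 1) with
`∑ i, p i • σ i = ρA` and `∑ i, q i • σ i = ρB`, of the Bhattacharyya overlap
`∑ i, √(p i * q i)`. -/
noncomputable def compat {d : Type*} [Fintype d] [DecidableEq d]
    (ρA ρB : Matrix d d ℂ) : ℝ :=
  sSup { c : ℝ | ∃ (m : ℕ) (σ : Fin m → Matrix d d ℂ) (p q : Fin m → ℝ),
    (∀ i, IsDensityMatrix (σ i)) ∧ (∀ i, 0 ≤ p i) ∧ (∀ i, 0 ≤ q i) ∧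
    ∑ i, p i = 1 ∧ ∑ i, q i = 1 ∧
    ∑ i, p i • σ i = ρA ∧ ∑ i, q i • σ i = ρB ∧
    c = ∑ i, Real.sqrt (p i * q i) }

open scoped Classical in
/-- The positive semidefinite square root of a positive semidefinite matrix
(junk value `0` on non-PSD matrices). -/
noncomputable def psdSqrt {d : Type*} [Fintype d] [DecidableEq d]
    (A : Matrix d d ℂ) : Matrix d d ℂ :=
  if h : A.PosSemidef then
    h.1.eigenvectorUnitary.1 * diagonal ((↑) ∘ (√·) ∘ h.1.eigenvalues) *
      (star h.1.eigenvectorUnitary : Matrix d d ℂ)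
  else 0

/-- The fidelity `F(ρA, ρB) = Tr √(√ρA ρB √ρA)`. -/
noncomputable def fidelity {d : Type*} [Fintype d] [DecidableEq d]
    (ρA ρB : Matrix d d ℂ) : ℝ :=
  (psdSqrt (psdSqrt ρA * ρB * psdSqrt ρA)).trace.re

/-- The pure-state density matrix `|ψ⟩⟨ψ|` associated to a vector `ψ`. -/
def pureState {d : Type*} [Fintype d] [DecidableEq d] (ψ : d → ℂ) : Matrix d d ℂ :=
  Matrix.vecMulVec ψ (star ψ)

/-!
Pure states are extreme points of the density matrices: if `∑ pᵢ σᵢ = |ψ⟩⟨ψ|`, then the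
quadratic form of every `σᵢ` with `pᵢ > 0` vanishes on `ψ^⊥`, so `σᵢ` kills `ψ^⊥`; being
Hermitian it is then a multiple of `|ψ⟩⟨ψ|`, and the trace forces `σᵢ = |ψ⟩⟨ψ|`. Hence for two different pure states no `σᵢ` has
weight in both decompositions and every overlap is `0`; for equal states the trivial
decomposition attains the Cauchy–Schwarz bound `∑ √(pᵢ qᵢ) ≤ 1`. Finally, by the equality case
of Cauchy–Schwarz, unit vectors give the same pure state exactly when `|⟨ψA, ψB⟩| = 1`.
-/

section PureState

variable {d : Type*} [Fintype d] [DecidableEq d]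

theorem pureState_mulVec (ψ x : d → ℂ) : pureState ψ *ᵥ x = (star ψ ⬝ᵥ x) • ψ := by
  rw [pureState, vecMulVec_mulVec, op_smul_eq_smul]

theorem pureState_mul_mul_pureState (ψ : d → ℂ) (A : Matrix d d ℂ) :
    pureState ψ * A * pureState ψ = (star ψ ⬝ᵥ A *ᵥ ψ) • pureState ψ := by
  rw [pureState, vecMulVec_mul, vecMulVec_mul_vecMulVec, vecMulVec_smul, dotProduct_mulVec]

theorem pureState_smul (c : ℂ) (ψ : d → ℂ) :
    pureState (c • ψ) = (c * star c) • pureState ψ := by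
  rw [pureState, star_smul, smul_vecMulVec, vecMulVec_smul, smul_smul]
  rfl

theorem isHermitian_pureState (ψ : d → ℂ) : (pureState ψ).IsHermitian :=
  (posSemidef_vecMulVec_self_star ψ).isHermitian

theorem isDensityMatrix_pureState {ψ : d → ℂ} (hψ : star ψ ⬝ᵥ ψ = 1) :
    IsDensityMatrix (pureState ψ) :=
  ⟨posSemidef_vecMulVec_self_star ψ, by rw [pureState, trace_vecMulVec, dotProduct_comm, hψ]⟩

theorem pureState_eq_pureState_iff {ψA ψB : d → ℂ} (hA : star ψA ⬝ᵥ ψA = 1)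
    (hB : star ψB ⬝ᵥ ψB = 1) :
    pureState ψA = pureState ψB ↔ ‖star ψA ⬝ᵥ ψB‖ = 1 := by
  set c := star ψA ⬝ᵥ ψB
  have hc : star ψB ⬝ᵥ ψA = star c := star_dotProduct ψB ψA
  have hnorm : star c * c = ((‖c‖ ^ 2 : ℝ) : ℂ) := by push_cast; exact Complex.conj_mul' c
  constructor
  · intro h
    have hψA : ψA = star c • ψB := by
      simpa only [pureState_mulVec, hA, one_smul, hc] using congrArg (· *ᵥ ψA) h
    have : star c * c = 1 := by
      simpa only [dotProduct_smul, smul_eq_mul, hA, eq_comm] using congrArg (star ψA ⬝ᵥ ·) hψA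
    rw [hnorm] at this
    exact (pow_eq_one_iff_of_nonneg (norm_nonneg c) two_ne_zero).mp (mod_cast this)
  · intro h
    have hcc : star c * c = 1 := by rw [hnorm, h]; norm_num
    have hψB : ψB = c • ψA := by
      rw [← sub_eq_zero, ← dotProduct_star_self_eq_zero, star_sub, star_smul]
      simp only [sub_dotProduct, dotProduct_sub, smul_dotProduct, dotProduct_smul, smul_eq_mul,
        hA, hB, hc]
      linear_combination (-1 : ℂ) * hcc
    rw [hψB, pureState_smul, mul_comm, hcc, one_smul]

end PureState

theorem Matrix.PosSemidef.mulVec_eq_zero_of_dotProduct_sum_smul_mulVec_eq_zero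
    {𝕜 d ι : Type*} [RCLike 𝕜] [Fintype d] [Fintype ι] {σ : ι → Matrix d d 𝕜} {p : ι → ℝ}
    (hσ : ∀ i, (σ i).PosSemidef) (hp : ∀ i, 0 ≤ p i) {x : d → 𝕜}
    (hx : star x ⬝ᵥ (∑ i, p i • σ i) *ᵥ x = 0) {i : ι} (hi : 0 < p i) : σ i *ᵥ x = 0 := by
  have hterms : ∑ j, (p j : 𝕜) * (star x ⬝ᵥ σ j *ᵥ x) = 0 := by
    simpa only [sum_mulVec, dotProduct_sum, smul_mulVec, dotProduct_smul,
      RCLike.real_smul_eq_coe_mul] using hx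
  have hterm_nonneg (j : ι) : 0 ≤ (p j : 𝕜) * (star x ⬝ᵥ σ j *ᵥ x) :=
    mul_nonneg (RCLike.ofReal_nonneg.mpr (hp j)) ((hσ j).dotProduct_mulVec_nonneg x)
  have hterm := (Finset.sum_eq_zero_iff_of_nonneg fun j _ => hterm_nonneg j).mp hterms i
    (Finset.mem_univ i)
  rw [← (hσ i).dotProduct_mulVec_zero_iff]
  exact (mul_eq_zero.mp hterm).resolve_left (RCLike.ofReal_ne_zero.mpr hi.ne')

section Extremality

variable {d : Type*} [Fintype d] [DecidableEq d]

theorem eq_pureState_of_mulVec_eq_zero {σ : Matrix d d ℂ} (hσ : IsDensityMatrix σ) {ψ : d → ℂ}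
    (hψ : star ψ ⬝ᵥ ψ = 1) (hker : ∀ x, star ψ ⬝ᵥ x = 0 → σ *ᵥ x = 0) : σ = pureState ψ := by
  have hright : σ * pureState ψ = σ := by
    refine ext_iff_mulVec.mpr fun v => ?_
    rw [← mulVec_mulVec, pureState_mulVec, ← sub_eq_zero, ← mulVec_sub]
    apply hker
    rw [dotProduct_sub, dotProduct_smul, hψ, smul_eq_mul, mul_one, sub_self]
  have hleft : pureState ψ * σ = σ := by
    simpa only [conjTranspose_mul, hσ.1.isHermitian.eq, (isHermitian_pureState ψ).eq]
      using congrArg conjTranspose hright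
  have hscalar : σ = (star ψ ⬝ᵥ σ *ᵥ ψ) • pureState ψ := by
    rw [← pureState_mul_mul_pureState, hleft, hright]
  have htrace : star ψ ⬝ᵥ σ *ᵥ ψ = 1 := by
    simpa only [hσ.2, trace_smul, (isDensityMatrix_pureState hψ).2, smul_eq_mul, mul_one,
      eq_comm] using congrArg trace hscalar
  rw [hscalar, htrace, one_smul]

theorem eq_pureState_of_sum_smul_eq {ι : Type*} [Fintype ι] {ψ : d → ℂ} (hψ : star ψ ⬝ᵥ ψ = 1)
    {σ : ι → Matrix d d ℂ} {p : ι → ℝ} (hσ : ∀ i, IsDensityMatrix (σ i)) (hp : ∀ i, 0 ≤ p i)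
    (hsum : ∑ i, p i • σ i = pureState ψ) {i : ι} (hi : 0 < p i) : σ i = pureState ψ :=
  eq_pureState_of_mulVec_eq_zero (hσ i) hψ fun x hx =>
    PosSemidef.mulVec_eq_zero_of_dotProduct_sum_smul_mulVec_eq_zero (fun j => (hσ j).1) hp
      (by rw [hsum, pureState_mulVec, hx, zero_smul, dotProduct_zero]) hi

end Extremality

theorem Real.sum_sqrt_mul_le_one {ι : Type*} [Fintype ι] {p q : ι → ℝ} (hp : ∀ i, 0 ≤ p i)
    (hq : ∀ i, 0 ≤ q i) (hp1 : ∑ i, p i = 1) (hq1 : ∑ i, q i = 1) :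
    ∑ i, √(p i * q i) ≤ 1 :=
  calc ∑ i, √(p i * q i) = ∑ i, √(p i) * √(q i) :=
        Finset.sum_congr rfl fun i _ => Real.sqrt_mul (hp i) _
    _ ≤ √(∑ i, p i) * √(∑ i, q i) := Real.sum_sqrt_mul_sqrt_le _ hp hq
    _ = 1 := by rw [hp1, hq1, Real.sqrt_one, mul_one]

section Compatibility

variable {d : Type*} [Fintype d] [DecidableEq d]

structure IsCommonDecomposition {ι : Type*} [Fintype ι] (ρA ρB : Matrix d d ℂ)
    (σ : ι → Matrix d d ℂ) (p q : ι → ℝ) : Prop where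
  isDensityMatrix : ∀ i, IsDensityMatrix (σ i)
  nonneg_left : ∀ i, 0 ≤ p i
  nonneg_right : ∀ i, 0 ≤ q i
  sum_left : ∑ i, p i = 1
  sum_right : ∑ i, q i = 1
  sum_smul_left : ∑ i, p i • σ i = ρA
  sum_smul_right : ∑ i, q i • σ i = ρB

variable {ρA ρB : Matrix d d ℂ}

theorem compat_le {c : ℝ} (hc : 0 ≤ c)
    (h : ∀ (m : ℕ) (σ : Fin m → Matrix d d ℂ) (p q : Fin m → ℝ),
      IsCommonDecomposition ρA ρB σ p q → ∑ i, √(p i * q i) ≤ c) :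
    compat ρA ρB ≤ c :=
  Real.sSup_le (by
    rintro _ ⟨m, σ, p, q, hσ, hp, hq, hp1, hq1, hpσ, hqσ, rfl⟩
    exact h m σ p q ⟨hσ, hp, hq, hp1, hq1, hpσ, hqσ⟩) hc

theorem le_compat {m : ℕ} {σ : Fin m → Matrix d d ℂ} {p q : Fin m → ℝ}
    (h : IsCommonDecomposition ρA ρB σ p q) : ∑ i, √(p i * q i) ≤ compat ρA ρB := by
  refine le_csSup ⟨1, ?_⟩ ⟨m, σ, p, q, h.1, h.2, h.3, h.4, h.5, h.6, h.7, rfl⟩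
  rintro _ ⟨m, σ, p, q, -, hp, hq, hp1, hq1, -, -, rfl⟩
  exact Real.sum_sqrt_mul_le_one hp hq hp1 hq1

theorem compat_nonneg : 0 ≤ compat ρA ρB :=
  Real.sSup_nonneg (by rintro _ ⟨m, σ, p, q, -, -, -, -, -, -, -, rfl⟩; positivity)

theorem compat_self {ρ : Matrix d d ℂ} (hρ : IsDensityMatrix ρ) : compat ρ ρ = 1 := by
  refine le_antisymm (compat_le zero_le_one fun m σ p q h =>
    Real.sum_sqrt_mul_le_one h.nonneg_left h.nonneg_right h.sum_left h.sum_right) ?_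
  have htrivial : IsCommonDecomposition ρ ρ (fun _ : Fin 1 => ρ) 1 1 := by
    constructor <;> simp [hρ]
  simpa using le_compat htrivial

theorem compat_pureState_of_ne {ψA ψB : d → ℂ} (hA : star ψA ⬝ᵥ ψA = 1)
    (hB : star ψB ⬝ᵥ ψB = 1) (hne : pureState ψA ≠ pureState ψB) :
    compat (pureState ψA) (pureState ψB) = 0 := by
  refine le_antisymm (compat_le le_rfl fun m σ p q h => ?_) compat_nonneg
  refine (Finset.sum_eq_zero fun i _ => Real.sqrt_eq_zero'.mpr (not_lt.mp fun hpq => hne ?_)).le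
  have hp : 0 < p i := pos_of_mul_pos_left hpq (h.nonneg_right i)
  have hq : 0 < q i := pos_of_mul_pos_right hpq (h.nonneg_left i)
  have hσA := eq_pureState_of_sum_smul_eq hA h.isDensityMatrix h.nonneg_left h.sum_smul_left hp
  have hσB := eq_pureState_of_sum_smul_eq hB h.isDensityMatrix h.nonneg_right h.sum_smul_right hq
  exact hσA.symm.trans hσB

end Compatibility

/-- **P3.** For pure states, the compatibility is `1` if `|⟨ψA, ψB⟩| = 1` and
`0` otherwise. -/
theorem compat_pure_states {n : ℕ} (ψA ψB : Fin n → ℂ)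
    (hA : star ψA ⬝ᵥ ψA = 1) (hB : star ψB ⬝ᵥ ψB = 1) :
    compat (pureState ψA) (pureState ψB)
      = if ‖star ψA ⬝ᵥ ψB‖ = 1 then 1 else 0 := by
  split_ifs with h
  · rw [(pureState_eq_pureState_iff hA hB).mpr h]
    exact compat_self (isDensityMatrix_pureState hB)
  · exact compat_pureState_of_ne hA hB (mt (pureState_eq_pureState_iff hA hB).mp h)
end

section
/- Let ρ_A and ρ_B be density matrices on ℂ^n, let τ be a density matrix on ℂ^n, and let q_A, q_B ∈ [0,1] be such that ρ_A − q_A τ and ρ_B − q_B τ are positive semidefinite. Then C(ρ_A, ρ_B) ≥ √(q_A q_B). -/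
open Matrix BigOperators
open scoped ComplexOrder

/-! Split each state as `ρ = q • τ + (1 - q) • σ` with `σ` a density matrix; the family
`τ, σA, σB` with weights `(qA, 1 - qA, 0)` and `(qB, 0, 1 - qB)` then has overlap `√(qA * qB)`. -/

variable {d : Type*} [Fintype d] [DecidableEq d]

-- When `q = 1` the remainder `ρ - τ` is positive semidefinite of trace zero, hence `ρ = τ`.
lemma exists_isDensityMatrix_eq_smul_add_smul {ρ τ : Matrix d d ℂ} (hρ : ρ.trace = 1)
    (hτ : IsDensityMatrix τ) {q : ℝ} (hq : q ≤ 1) (h : (ρ - q • τ).PosSemidef) :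
    ∃ σ, IsDensityMatrix σ ∧ ρ = q • τ + (1 - q) • σ := by
  have htrace : (ρ - q • τ).trace = ((1 - q : ℝ) : ℂ) := by
    rw [trace_sub, trace_smul, hρ, hτ.2, Complex.real_smul]
    push_cast; ring
  rcases hq.lt_or_eq with hq | rfl
  · have hq' : (1 - q) ≠ 0 := (sub_pos.mpr hq).ne'
    refine ⟨(1 - q)⁻¹ • (ρ - q • τ), ⟨h.smul (inv_nonneg.mpr (sub_pos.mpr hq).le), ?_⟩, ?_⟩
    · rw [trace_smul, htrace, Complex.real_smul, ← Complex.ofReal_mul, inv_mul_cancel₀ hq',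
        Complex.ofReal_one]
    · rw [smul_smul, mul_inv_cancel₀ hq', one_smul, add_sub_cancel]
  · have hρτ : ρ - (1 : ℝ) • τ = 0 := h.trace_eq_zero_iff.mp (by simpa using htrace)
    exact ⟨τ, hτ, by simpa [sub_eq_zero] using hρτ⟩

lemma Real.sqrt_mul_le_half_add {p q : ℝ} (hp : 0 ≤ p) (hq : 0 ≤ q) :
    √(p * q) ≤ (p + q) / 2 :=
  Real.sqrt_le_iff.mpr ⟨by positivity, by nlinarith [sq_nonneg (p - q)]⟩

lemma bddAbove_compat_set (ρA ρB : Matrix d d ℂ) :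
    BddAbove { c : ℝ | ∃ (m : ℕ) (σ : Fin m → Matrix d d ℂ) (p q : Fin m → ℝ),
      (∀ i, IsDensityMatrix (σ i)) ∧ (∀ i, 0 ≤ p i) ∧ (∀ i, 0 ≤ q i) ∧
      ∑ i, p i = 1 ∧ ∑ i, q i = 1 ∧
      ∑ i, p i • σ i = ρA ∧ ∑ i, q i • σ i = ρB ∧
      c = ∑ i, Real.sqrt (p i * q i) } := by
  refine ⟨1, ?_⟩
  rintro c ⟨m, σ, p, q, -, hp, hq, hp1, hq1, -, -, rfl⟩
  calc ∑ i, √(p i * q i) ≤ ∑ i, (p i + q i) / 2 :=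
        Finset.sum_le_sum fun i _ ↦ Real.sqrt_mul_le_half_add (hp i) (hq i)
    _ = 1 := by rw [← Finset.sum_div, Finset.sum_add_distrib, hp1, hq1]; norm_num

lemma sqrt_mul_le_compat {ρA ρB τ σA σB : Matrix d d ℂ} (hτ : IsDensityMatrix τ)
    (hσA : IsDensityMatrix σA) (hσB : IsDensityMatrix σB) {qA qB : ℝ}
    (hqA : qA ∈ Set.Icc (0 : ℝ) 1) (hqB : qB ∈ Set.Icc (0 : ℝ) 1)
    (hρA : ρA = qA • τ + (1 - qA) • σA) (hρB : ρB = qB • τ + (1 - qB) • σB) :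
    √(qA * qB) ≤ compat ρA ρB := by
  refine le_csSup (bddAbove_compat_set ρA ρB)
    ⟨3, ![τ, σA, σB], ![qA, 1 - qA, 0], ![qB, 0, 1 - qB], ?_, ?_, ?_, ?_, ?_, ?_, ?_, ?_⟩
  · intro i; fin_cases i <;> assumption
  · intro i; fin_cases i <;> simp [hqA.1, hqA.2]
  · intro i; fin_cases i <;> simp [hqB.1, hqB.2]
  all_goals simp [Fin.sum_univ_three, hρA, hρB]

/-- **P6** (lower bound). If `ρA - qA • τ` and `ρB - qB • τ` are positive
semidefinite for a density matrix `τ`, then `C(ρA, ρB) ≥ √(qA * qB)`. -/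
theorem compat_lower_bound {n : ℕ}
    (ρA ρB τ : Matrix (Fin n) (Fin n) ℂ)
    (hA : IsDensityMatrix ρA) (hB : IsDensityMatrix ρB) (hτ : IsDensityMatrix τ)
    (qA qB : ℝ) (hqA : qA ∈ Set.Icc (0 : ℝ) 1) (hqB : qB ∈ Set.Icc (0 : ℝ) 1)
    (hA' : (ρA - qA • τ).PosSemidef) (hB' : (ρB - qB • τ).PosSemidef) :
    Real.sqrt (qA * qB) ≤ compat ρA ρB := by
  obtain ⟨σA, hσA, hρA⟩ := exists_isDensityMatrix_eq_smul_add_smul hA.2 hτ hqA.2 hA'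
  obtain ⟨σB, hσB, hρB⟩ := exists_isDensityMatrix_eq_smul_add_smul hB.2 hτ hqB.2 hB'
  exact sqrt_mul_le_compat hτ hσA hσB hqA hqB hρA hρB
end
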